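/- Let A be an m×q dual complex matrix and B a q×n dual complex matrix, let N_A be an NDMPI of A and N_B an NDMPI of B, and set A_e = A·N_A·A and B_e = B·N_B·B. If N_A·A·B·B*·A* = B·B*·(A_e)* and B·N_B·A*·A·B = A*·A·B_e, then N_A·A·B·B* = B·B*·N_A·A. -/

import Mathlib

/-!
With `P = N_A·A`, a Hermitian idempotent, and `S = B·B*`, conjugating the first hypothesis and
multiplying on the left by `N_A` gives `P·S·P = P·S`. The left side is Hermitian, so
`P·S = (P·S)* = S·P`.
-/

open Matrix

/-- The dual complex numbers ℂ[ε] with ε² = 0 (dual numbers over ℂ). -/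
abbrev DualComplex := DualNumber ℂ

/-- Conjugation on dual complex numbers: star (a + b·ε) = (conj a) + (conj b)·ε. -/
noncomputable instance : StarRing DualComplex where
  star x := ⟨star x.fst, star x.snd⟩
  star_involutive x := TrivSqZeroExt.ext (star_star x.fst) (star_star x.snd)
  star_mul x y := TrivSqZeroExt.ext
    (by simp [TrivSqZeroExt.fst_mul, mul_comm]; exact mul_comm _ _)
    (by simp [TrivSqZeroExt.snd_mul]; erw [TrivSqZeroExt.snd_mul]; simp [TrivSqZeroExt.fst_mk, TrivSqZeroExt.snd_mk]; ring)
  star_add x y := TrivSqZeroExt.ext (by simp; rfl) (by simp; rfl)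

/-- `X` is a new dual Moore–Penrose inverse (NDMPI) of `M`:
`M*·M·X·M·M* = M*·M·M*`, `X·M·X = X`, `(M·X)* = M·X`, `(X·M)* = X·M`. -/
def IsNDMPI {m n : ℕ} (M : Matrix (Fin m) (Fin n) DualComplex)
    (X : Matrix (Fin n) (Fin m) DualComplex) : Prop :=
  Mᴴ * M * X * M * Mᴴ = Mᴴ * M * Mᴴ ∧
  X * M * X = X ∧
  (M * X)ᴴ = M * X ∧
  (X * M)ᴴ = X * M

theorem commute_of_mul_mul_self_eq {R : Type*} [Monoid R] [StarMul R] {p s : R}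
    (hp : IsSelfAdjoint p) (hs : IsSelfAdjoint s) (h : p * s * p = p * s) : Commute p s :=
  calc p * s = p * s * p := h.symm
    _ = star (p * s * p) := by rw [star_mul, star_mul, hp.star_eq, hs.star_eq, mul_assoc]
    _ = s * p := by rw [h, star_mul, hp.star_eq, hs.star_eq]

namespace IsNDMPI

variable {m n : ℕ} {M : Matrix (Fin m) (Fin n) DualComplex} {X : Matrix (Fin n) (Fin m) DualComplex}

theorem isSelfAdjoint_mul (h : IsNDMPI M X) : IsSelfAdjoint (X * M) := h.2.2.2

theorem isIdempotentElem_mul (h : IsNDMPI M X) : IsIdempotentElem (X * M) := by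
  rw [IsIdempotentElem, ← Matrix.mul_assoc, h.2.1]

end IsNDMPI

theorem stmt_3_general {m q n : ℕ} (A : Matrix (Fin m) (Fin q) DualComplex)
    (B : Matrix (Fin q) (Fin n) DualComplex)
    (NA : Matrix (Fin q) (Fin m) DualComplex) (hNA : IsNDMPI A NA)
    (h1 : NA * A * B * Bᴴ * Aᴴ = B * Bᴴ * (A * NA * A)ᴴ) :
    NA * A * B * Bᴴ = B * Bᴴ * (NA * A) := by
  have hS : IsSelfAdjoint (B * Bᴴ) := (isHermitian_mul_conjTranspose_self B).isSelfAdjoint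
  have hAS : A * (B * Bᴴ) * (NA * A) = A * (NA * A) * (B * Bᴴ) := by
    have h := congrArg conjTranspose h1
    have hP : Aᴴ * NAᴴ = NA * A := by rw [← conjTranspose_mul]; exact hNA.isSelfAdjoint_mul
    simp only [conjTranspose_mul, conjTranspose_conjTranspose, Matrix.mul_assoc, hP] at h
    simpa only [Matrix.mul_assoc] using h
  have hPSP : NA * A * (B * Bᴴ) * (NA * A) = NA * A * (B * Bᴴ) :=
    calc NA * A * (B * Bᴴ) * (NA * A) = NA * (A * (B * Bᴴ) * (NA * A)) := by
          simp only [Matrix.mul_assoc]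
      _ = NA * A * (NA * A) * (B * Bᴴ) := by rw [hAS]; simp only [Matrix.mul_assoc]
      _ = NA * A * (B * Bᴴ) := by rw [hNA.isIdempotentElem_mul.eq]
  simpa only [Matrix.mul_assoc] using
    (commute_of_mul_mul_self_eq hNA.isSelfAdjoint_mul hS hPSP).eq

/-- If `N_A·A·B·B*·A* = B·B*·(A_e)*` and `B·N_B·A*·A·B = A*·A·B_e`,
then `N_A·A·B·B* = B·B*·N_A·A`. -/
theorem stmt_3 {m q n : ℕ} (A : Matrix (Fin m) (Fin q) DualComplex)
    (B : Matrix (Fin q) (Fin n) DualComplex)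
    (NA : Matrix (Fin q) (Fin m) DualComplex) (hNA : IsNDMPI A NA)
    (NB : Matrix (Fin n) (Fin q) DualComplex) (hNB : IsNDMPI B NB)
    (h1 : NA * A * B * Bᴴ * Aᴴ = B * Bᴴ * (A * NA * A)ᴴ)
    (h2 : B * NB * Aᴴ * A * B = Aᴴ * A * (B * NB * B)) :
    NA * A * B * Bᴴ = B * Bᴴ * (NA * A) :=
  stmt_3_general A B NA hNA h1
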